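/- Let 0 ≤ α < 1 and 0 < r < 1. If |aₙ| ≤ ((n+1)/2)² and |bₙ| ≤ ((n-1)/2)² for all n ≥ 2 (with b₁ = 0), and 2(1-α)(1-r)⁴ + α(1-r)² - (r² + r + 1) ≥ 0, then ∑_{n≥2} ((n-α)/(1-α))|aₙ| r^{n-1} + ∑_{n≥2} ((n+α)/(1-α))|bₙ| r^{n-1} ≤ 1. -/

import Mathlib

/-!
For `m = n + 2` the coefficient bounds give, termwise,
`(m - α)((m + 1)/2)² + (m + α)((m - 1)/2)² = (m³ + (1 - 2α) m)/2`,
so both series together are dominated by `∑_{m ≥ 2} (m³ + (1 - 2α) m) r^(m-1) / (2(1 - α))`.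
With `∑ m³ r^(m-1) = (1 + 4r + r²)/(1 - r)⁴` and `∑ m r^(m-1) = 1/(1 - r)²` this majorant equals
`1 - P/((1 - α)(1 - r)⁴)`, where `P ≥ 0` is the polynomial of the hypothesis.
-/

theorem Nat.add_one_pow_three_add_six_mul_choose (n : ℕ) :
    (n + 1) ^ 3 + 6 * (n + 2).choose 2 = 6 * (n + 3).choose 3 + (n + 1).choose 1 := by
  have h3 := Nat.add_one_mul_choose_eq (n + 2) 2
  have h2 := Nat.add_one_mul_choose_eq (n + 1) 1
  simp only [Nat.choose_one_right] at h2 ⊢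
  nlinarith

section Geometric

variable {𝕜 : Type*} [NormedField 𝕜] {r : 𝕜}

theorem hasSum_add_one_pow_three_mul_geometric (hr : ‖r‖ < 1) :
    HasSum (fun n : ℕ ↦ ((n : 𝕜) + 1) ^ 3 * r ^ n) ((1 + 4 * r + r ^ 2) / (1 - r) ^ 4) := by
  have hr1 : 1 - r ≠ 0 := sub_ne_zero.2 (by rintro rfl; simp at hr)
  have H := ((hasSum_choose_mul_geometric_of_norm_lt_one 3 hr).mul_left 6).sub
    ((hasSum_choose_mul_geometric_of_norm_lt_one 2 hr).mul_left 6) |>.add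
    (hasSum_choose_mul_geometric_of_norm_lt_one 1 hr)
  have hterm : ∀ n : ℕ, ((n : 𝕜) + 1) ^ 3 * r ^ n = 6 * ((n + 3).choose 3 * r ^ n)
      - 6 * ((n + 2).choose 2 * r ^ n) + (n + 1).choose 1 * r ^ n := fun n ↦ by
    have h := congrArg (Nat.cast : ℕ → 𝕜) (Nat.add_one_pow_three_add_six_mul_choose n)
    push_cast at h
    linear_combination r ^ n * h
  have hsum : (1 + 4 * r + r ^ 2) / (1 - r) ^ 4
      = 6 * (1 / (1 - r) ^ (3 + 1)) - 6 * (1 / (1 - r) ^ (2 + 1)) + 1 / (1 - r) ^ (1 + 1) := by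
    field_simp
    ring
  simpa only [hterm, hsum] using H

theorem hasSum_add_one_mul_geometric (hr : ‖r‖ < 1) :
    HasSum (fun n : ℕ ↦ ((n : 𝕜) + 1) * r ^ n) (1 / (1 - r) ^ 2) := by
  simpa [add_comm] using hasSum_choose_mul_geometric_of_norm_lt_one 1 hr

theorem hasSum_add_two_pow_three_add_mul_geometric (c : 𝕜) (hr : ‖r‖ < 1) :
    HasSum (fun n : ℕ ↦ (((n : 𝕜) + 2) ^ 3 + c * ((n : 𝕜) + 2)) * r ^ (n + 1))
      ((1 + 4 * r + r ^ 2) / (1 - r) ^ 4 - 1 + c * (1 / (1 - r) ^ 2 - 1)) := by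
  have H := (hasSum_add_one_pow_three_mul_geometric hr).add
    ((hasSum_add_one_mul_geometric hr).mul_left c)
  rw [← hasSum_nat_add_iff' 1] at H
  have hterm : (fun n : ℕ ↦ (((n : 𝕜) + 2) ^ 3 + c * ((n : 𝕜) + 2)) * r ^ (n + 1)) = fun n ↦
      (((n + 1 : ℕ) : 𝕜) + 1) ^ 3 * r ^ (n + 1) + c * ((((n + 1 : ℕ) : 𝕜) + 1) * r ^ (n + 1)) := by
    ext n; push_cast; ring
  have hsum : (1 + 4 * r + r ^ 2) / (1 - r) ^ 4 - 1 + c * (1 / (1 - r) ^ 2 - 1)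
      = (1 + 4 * r + r ^ 2) / (1 - r) ^ 4 + c * (1 / (1 - r) ^ 2)
        - ∑ i ∈ Finset.range 1, (((i : 𝕜) + 1) ^ 3 * r ^ i + c * (((i : 𝕜) + 1) * r ^ i)) := by
    simp only [Finset.sum_range_one]
    ring
  rw [hterm, hsum]
  exact H

end Geometric

theorem tsum_add_tsum_le_of_hasSum {ι : Type*} {f g h : ι → ℝ} {s : ℝ} (hf : ∀ i, 0 ≤ f i)
    (hg : ∀ i, 0 ≤ g i) (hfg : ∀ i, f i + g i ≤ h i) (hh : HasSum h s) :
    ∑' i, f i + ∑' i, g i ≤ s := by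
  have hf_sum : Summable f :=
    hh.summable.of_nonneg_of_le hf fun i ↦ (le_add_of_nonneg_right (hg i)).trans (hfg i)
  have hg_sum : Summable g :=
    hh.summable.of_nonneg_of_le hg fun i ↦ (le_add_of_nonneg_left (hf i)).trans (hfg i)
  rw [← hf_sum.tsum_add hg_sum]
  exact hasSum_le hfg (hf_sum.add hg_sum).hasSum hh

theorem weighted_coeff_add_le_cube {α m A B t : ℝ} (hα : α < 1) (hm : |α| ≤ m) (ht : 0 ≤ t)
    (hA : A ≤ ((m + 1) / 2) ^ 2) (hB : B ≤ ((m - 1) / 2) ^ 2) :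
    (m - α) / (1 - α) * A * t + (m + α) / (1 - α) * B * t
      ≤ (m ^ 3 + (1 - 2 * α) * m) / (2 * (1 - α)) * t := by
  have h1α : 0 < 1 - α := by linarith
  have hmα : 0 ≤ m - α := by linarith [le_abs_self α]
  have hmα' : 0 ≤ m + α := by linarith [neg_abs_le α]
  calc (m - α) / (1 - α) * A * t + (m + α) / (1 - α) * B * t
      ≤ (m - α) / (1 - α) * ((m + 1) / 2) ^ 2 * t + (m + α) / (1 - α) * ((m - 1) / 2) ^ 2 * t := by
        gcongr
    _ = (m ^ 3 + (1 - 2 * α) * m) / (2 * (1 - α)) * t := by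
        field_simp
        ring

theorem cube_majorant_le_one {α r : ℝ} (hα : α < 1) (hr : r < 1)
    (hpoly : 0 ≤ 2 * (1 - α) * (1 - r) ^ 4 + α * (1 - r) ^ 2 - (r ^ 2 + r + 1)) :
    ((1 + 4 * r + r ^ 2) / (1 - r) ^ 4 - 1 + (1 - 2 * α) * (1 / (1 - r) ^ 2 - 1))
      / (2 * (1 - α)) ≤ 1 := by
  have h1α : 0 < 1 - α := by linarith
  have h1r : 0 < 1 - r := by linarith
  have key : 1 - ((1 + 4 * r + r ^ 2) / (1 - r) ^ 4 - 1 + (1 - 2 * α) * (1 / (1 - r) ^ 2 - 1))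
      / (2 * (1 - α)) = (2 * (1 - α) * (1 - r) ^ 4 + α * (1 - r) ^ 2 - (r ^ 2 + r + 1))
      / ((1 - α) * (1 - r) ^ 4) := by
    field_simp
    ring
  rw [← sub_nonneg, key]
  positivity

theorem stmt_17_general (α : ℝ) (hα0 : 0 ≤ α) (hα1 : α < 1) (r : ℝ) (h0 : 0 < r) (h1 : r < 1)
    (a b : ℕ → ℂ)
    (ha : ∀ n : ℕ, 2 ≤ n → ‖a n‖ ≤ ((n + 1) / 2) ^ 2)
    (hb : ∀ n : ℕ, 2 ≤ n → ‖b n‖ ≤ ((n - 1) / 2) ^ 2)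
    (hpoly : 0 ≤ 2 * (1 - α) * (1 - r) ^ 4 + α * (1 - r) ^ 2 - (r ^ 2 + r + 1)) :
    (∑' n : ℕ, (((n + 2 : ℝ) - α) / (1 - α)) * ‖a (n + 2)‖ * r ^ (n + 1))
      + (∑' n : ℕ, (((n + 2 : ℝ) + α) / (1 - α)) * ‖b (n + 2)‖ * r ^ (n + 1)) ≤ 1 := by
  have h1α : 0 < 1 - α := by linarith
  have hr : ‖r‖ < 1 := by rwa [Real.norm_of_nonneg h0.le]
  have hαm : ∀ n : ℕ, |α| ≤ (n : ℝ) + 2 := fun n ↦ by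
    rw [abs_of_nonneg hα0]; linarith [n.cast_nonneg (α := ℝ)]
  refine (tsum_add_tsum_le_of_hasSum (fun n ↦ ?_) (fun n ↦ ?_) (fun n ↦ ?_)
    ((hasSum_add_two_pow_three_add_mul_geometric (1 - 2 * α) hr).div_const (2 * (1 - α)))).trans
    (cube_majorant_le_one hα1 h1 hpoly)
  · have : 0 ≤ (n : ℝ) + 2 - α := by linarith [hαm n]
    positivity
  · positivity
  · rw [mul_div_right_comm]
    refine weighted_coeff_add_le_cube hα1 (hαm n) (by positivity) ?_ ?_
    · simpa using ha (n + 2) (by omega)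
    · convert hb (n + 2) (by omega) using 3; push_cast; ring

theorem stmt_17 (α : ℝ) (hα0 : 0 ≤ α) (hα1 : α < 1) (r : ℝ) (h0 : 0 < r) (h1 : r < 1)
    (a b : ℕ → ℂ) (hb1 : b 1 = 0)
    (ha : ∀ n : ℕ, 2 ≤ n → ‖a n‖ ≤ ((n + 1) / 2) ^ 2)
    (hb : ∀ n : ℕ, 2 ≤ n → ‖b n‖ ≤ ((n - 1) / 2) ^ 2)
    (hpoly : 0 ≤ 2 * (1 - α) * (1 - r) ^ 4 + α * (1 - r) ^ 2 - (r ^ 2 + r + 1)) :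
    (∑' n : ℕ, (((n + 2 : ℝ) - α) / (1 - α)) * ‖a (n + 2)‖ * r ^ (n + 1))
      + (∑' n : ℕ, (((n + 2 : ℝ) + α) / (1 - α)) * ‖b (n + 2)‖ * r ^ (n + 1)) ≤ 1 :=
  stmt_17_general α hα0 hα1 r h0 h1 a b ha hb hpoly
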